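/- Any free expansion of an integer polyquantoid is a quantoid: if (N,e) is an integer polyquantoid and ψ assigns to each i ∈ N a set ψ(i) of cardinality e({i}) with the sets ψ(i) pairwise disjoint, then the function e_ψ(K) = min over J ⊆ N of [e(J) + |K △ ψ(J)|], for K ⊆ ψ(N), is normalized, complementary, submodular, and takes value 1 on every singleton (hence is an integer polyquantoid with singleton values in {0,1}). -/

import Mathlib

/-!
Every bound on `e_ψ` is obtained by comparing minimizers. Complementarity: `J ↦ Jᶜ` together
with `K ↦ ψ(N) \ K` preserves both terms of the minimized expression. Submodularity: minimizers
`J₁`, `J₂` for `K`, `L` give the candidates `J₁ ∪ J₂` and `J₁ ∩ J₂` for `K ∪ L` and `K ∩ L`,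
since `ψ` maps unions and (by disjointness) intersections of index sets to unions and
intersections, and `(K, A) ↦ |K △ A|` is submodular on pairs. Singletons: `J = ∅` gives the
value `1`, while a `J` whose image contains `k ∈ ψ(j)` costs at least `2 e({j}) - 1 ≥ 1`, by the
posimodularity `e({j}) ≤ e(J) + e(J \ {j})` of symmetric submodular functions.
-/

open Finset

/-- The free expansion `e_ψ` of an integer set function `e`, using symmetric difference. -/
def expandQ {N M : Type*} [Fintype N] [DecidableEq N] [DecidableEq M]
    (e : Finset N → ℤ) (ψ : N → Finset M) (K : Finset M) : ℤ :=
  (Finset.univ : Finset N).powerset.inf' (Finset.powerset_nonempty _)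
    (fun J => e J + ((symmDiff K (J.biUnion ψ)).card : ℤ))

open Function
open scoped symmDiff

namespace Finset

variable {α β : Type*} [DecidableEq α] [DecidableEq β]

theorem card_symmDiff_union_add_card_symmDiff_inter_le (K L A B : Finset α) :
    #((K ∪ L) ∆ (A ∪ B)) + #((K ∩ L) ∆ (A ∩ B)) ≤ #(K ∆ A) + #(L ∆ B) := by
  calc #((K ∪ L) ∆ (A ∪ B)) + #((K ∩ L) ∆ (A ∩ B))
      = #((K ∪ L) ∆ (A ∪ B) ∪ (K ∩ L) ∆ (A ∩ B)) + #((K ∪ L) ∆ (A ∪ B) ∩ (K ∩ L) ∆ (A ∩ B)) :=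
        (card_union_add_card_inter _ _).symm
    _ ≤ #(K ∆ A ∪ L ∆ B) + #(K ∆ A ∩ L ∆ B) := by
        refine add_le_add (card_le_card fun x => ?_) (card_le_card fun x => ?_) <;>
          simp only [mem_union, mem_inter, mem_symmDiff] <;> tauto
    _ = #(K ∆ A) + #(L ∆ B) := card_union_add_card_inter _ _

theorem sdiff_symmDiff_sdiff_of_subset {W K A : Finset α} (hK : K ⊆ W) (hA : A ⊆ W) :
    (W \ K) ∆ (W \ A) = K ∆ A := by
  ext x
  have := @hK x
  have := @hA x
  simp only [mem_symmDiff, mem_sdiff]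
  tauto

theorem singleton_symmDiff_of_mem {k : α} {S : Finset α} (hk : k ∈ S) :
    {k} ∆ S = S.erase k := by
  ext x
  simp only [mem_symmDiff, mem_singleton, mem_erase]
  grind

theorem singleton_symmDiff_of_notMem {k : α} {S : Finset α} (hk : k ∉ S) :
    {k} ∆ S = insert k S := by
  ext x
  simp only [mem_symmDiff, mem_singleton, mem_insert]
  grind

theorem biUnion_inter_of_pairwise_disjoint {f : α → Finset β} (h : Pairwise (Disjoint on f))
    (s t : Finset α) : (s ∩ t).biUnion f = s.biUnion f ∩ t.biUnion f := by
  rw [← coe_inj]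
  push_cast [coe_biUnion]
  exact Set.biUnion_inter_of_pairwise_disjoint (fun i j hij => by simpa using h hij) _ _

theorem biUnion_compl_of_pairwise_disjoint [Fintype α] {f : α → Finset β}
    (h : Pairwise (Disjoint on f)) (s : Finset α) :
    sᶜ.biUnion f = univ.biUnion f \ s.biUnion f := by
  have hdisj : Disjoint (s.biUnion f) (sᶜ.biUnion f) := by
    rw [disjoint_iff_inter_eq_empty, ← biUnion_inter_of_pairwise_disjoint h, inter_compl,
      biUnion_empty]
  rw [← union_compl s, union_biUnion, union_sdiff_cancel_left hdisj]

end Finset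

section SymmetricSubmodular

variable {N : Type*} [DecidableEq N] {e : Finset N → ℤ}

theorem posimodular_of_submodular_of_compl [Fintype N] (hcompl : ∀ I, e I = e Iᶜ)
    (hsub : ∀ I J, e (I ∪ J) + e (I ∩ J) ≤ e I + e J) (I J : Finset N) :
    e (I \ J) + e (J \ I) ≤ e I + e J := by
  have h := hsub I Jᶜ
  rw [hcompl (I ∪ Jᶜ), ← hcompl J] at h
  simpa [sdiff_eq_inter_compl, inter_comm, add_comm] using h

theorem nonneg_of_posimodular (h0 : e ∅ = 0)
    (hpos : ∀ I J, e (I \ J) + e (J \ I) ≤ e I + e J) (I : Finset N) : 0 ≤ e I := by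
  have h := hpos I I
  rw [Finset.sdiff_self, h0] at h
  linarith

theorem le_sum_singleton_of_submodular (h0 : e ∅ = 0)
    (hsub : ∀ I J, e (I ∪ J) + e (I ∩ J) ≤ e I + e J) (S : Finset N) :
    e S ≤ ∑ j ∈ S, e {j} := by
  induction S using Finset.induction_on with
  | empty => simp [h0]
  | insert a S ha ih =>
    have h := hsub {a} S
    rw [singleton_inter_of_notMem ha, h0, ← insert_eq] at h
    rw [sum_insert ha]
    linarith

theorem le_add_sum_erase_of_submodular_of_compl [Fintype N] (h0 : e ∅ = 0)
    (hcompl : ∀ I, e I = e Iᶜ) (hsub : ∀ I J, e (I ∪ J) + e (I ∩ J) ≤ e I + e J)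
    {J : Finset N} {j : N} (hj : j ∈ J) : e {j} ≤ e J + ∑ l ∈ J.erase j, e {l} := by
  have h := posimodular_of_submodular_of_compl hcompl hsub J (J.erase j)
  rw [sdiff_erase_self hj, sdiff_eq_empty_iff_subset.mpr (erase_subset j J), h0] at h
  linarith [le_sum_singleton_of_submodular h0 hsub (J.erase j)]

end SymmetricSubmodular

theorem card_biUnion_eq_sum {N M : Type*} [DecidableEq M] {e : Finset N → ℤ} {ψ : N → Finset M}
    (hcard : ∀ i, (#(ψ i) : ℤ) = e {i}) (hψ : Pairwise (Disjoint on ψ))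
    (J : Finset N) : (#(J.biUnion ψ) : ℤ) = ∑ j ∈ J, e {j} := by
  rw [card_biUnion fun i _ j _ hij => hψ hij]
  push_cast
  exact sum_congr rfl fun i _ => hcard i

section FreeExpansion

variable {N M : Type*} [Fintype N] [DecidableEq N] [DecidableEq M] {e : Finset N → ℤ}
  {ψ : N → Finset M}

theorem expandQ_le (K : Finset M) (J : Finset N) :
    expandQ e ψ K ≤ e J + #(K ∆ J.biUnion ψ) :=
  inf'_le _ (mem_powerset.mpr (subset_univ J))

theorem le_expandQ {K : Finset M} {c : ℤ} (h : ∀ J, c ≤ e J + #(K ∆ J.biUnion ψ)) :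
    c ≤ expandQ e ψ K :=
  le_inf' _ _ fun J _ => h J

theorem exists_expandQ_eq (K : Finset M) :
    ∃ J, expandQ e ψ K = e J + #(K ∆ J.biUnion ψ) := by
  obtain ⟨J, -, hJ⟩ := exists_mem_eq_inf' (powerset_nonempty (univ : Finset N))
    fun J => e J + (#(K ∆ J.biUnion ψ) : ℤ)
  exact ⟨J, hJ⟩

theorem expandQ_empty (h0 : e ∅ = 0) (hnonneg : ∀ J, 0 ≤ e J) : expandQ e ψ ∅ = 0 :=
  le_antisymm (by simpa [h0] using expandQ_le (e := e) (ψ := ψ) ∅ ∅)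
    (le_expandQ fun J => by linarith [hnonneg J])

theorem expandQ_sdiff_le (hcompl : ∀ I, e I = e Iᶜ) (hψ : Pairwise (Disjoint on ψ))
    {K : Finset M} (hK : K ⊆ univ.biUnion ψ) :
    expandQ e ψ (univ.biUnion ψ \ K) ≤ expandQ e ψ K :=
  le_expandQ fun J => by
    have h := expandQ_le (e := e) (ψ := ψ) (univ.biUnion ψ \ K) Jᶜ
    rwa [biUnion_compl_of_pairwise_disjoint hψ, sdiff_symmDiff_sdiff_of_subset hK
      (biUnion_subset_biUnion_of_subset_left ψ (subset_univ J)), ← hcompl] at h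

theorem expandQ_sdiff (hcompl : ∀ I, e I = e Iᶜ) (hψ : Pairwise (Disjoint on ψ))
    {K : Finset M} (hK : K ⊆ univ.biUnion ψ) :
    expandQ e ψ (univ.biUnion ψ \ K) = expandQ e ψ K := by
  refine le_antisymm (expandQ_sdiff_le hcompl hψ hK) ?_
  have h := expandQ_sdiff_le hcompl hψ (sdiff_subset (t := K))
  rwa [Finset.sdiff_sdiff_eq_self hK] at h

theorem expandQ_submodular (hsub : ∀ I J, e (I ∪ J) + e (I ∩ J) ≤ e I + e J)
    (hψ : Pairwise (Disjoint on ψ)) (K L : Finset M) :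
    expandQ e ψ (K ∪ L) + expandQ e ψ (K ∩ L) ≤ expandQ e ψ K + expandQ e ψ L := by
  obtain ⟨J₁, hJ₁⟩ := exists_expandQ_eq (e := e) (ψ := ψ) K
  obtain ⟨J₂, hJ₂⟩ := exists_expandQ_eq (e := e) (ψ := ψ) L
  have hunion := expandQ_le (e := e) (ψ := ψ) (K ∪ L) (J₁ ∪ J₂)
  have hinter := expandQ_le (e := e) (ψ := ψ) (K ∩ L) (J₁ ∩ J₂)
  rw [union_biUnion] at hunion
  rw [biUnion_inter_of_pairwise_disjoint hψ] at hinter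
  have hcard := card_symmDiff_union_add_card_symmDiff_inter_le K L (J₁.biUnion ψ) (J₂.biUnion ψ)
  zify at hcard
  linarith [hsub J₁ J₂]

theorem expandQ_singleton (h0 : e ∅ = 0) (hcompl : ∀ I, e I = e Iᶜ)
    (hsub : ∀ I J, e (I ∪ J) + e (I ∩ J) ≤ e I + e J) (hcard : ∀ i, (#(ψ i) : ℤ) = e {i})
    (hψ : Pairwise (Disjoint on ψ)) (k : M) : expandQ e ψ {k} = 1 := by
  refine le_antisymm (by simpa [h0, symmDiff_def] using expandQ_le (e := e) (ψ := ψ) {k} ∅)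
    (le_expandQ fun J => ?_)
  by_cases hk : k ∈ J.biUnion ψ
  · obtain ⟨j, hj, hkj⟩ := mem_biUnion.mp hk
    have hj_pos : 1 ≤ e {j} := by
      rw [← hcard j]
      exact_mod_cast card_pos.mpr ⟨k, hkj⟩
    have hj_le := le_add_sum_erase_of_submodular_of_compl h0 hcompl hsub hj
    have hψJ : (#(J.biUnion ψ) : ℤ) = e {j} + ∑ l ∈ J.erase j, e {l} := by
      rw [card_biUnion_eq_sum hcard hψ, add_sum_erase J (fun l => e {l}) hj]
    rw [singleton_symmDiff_of_mem hk, card_erase_of_mem hk,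
      Nat.cast_sub (card_pos.mpr ⟨k, hk⟩)]
    push_cast
    linarith
  · rw [singleton_symmDiff_of_notMem hk, card_insert_of_notMem hk]
    push_cast
    linarith [nonneg_of_posimodular h0 (posimodular_of_submodular_of_compl hcompl hsub) J]

end FreeExpansion

theorem free_expansion_is_quantoid {N M : Type*} [Fintype N] [DecidableEq N] [DecidableEq M]
    (e : Finset N → ℤ)
    (hnorm : e ∅ = 0)
    (hcompl : ∀ I : Finset N, e I = e Iᶜ)
    (hsub : ∀ I J : Finset N, e (I ∪ J) + e (I ∩ J) ≤ e I + e J)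
    (ψ : N → Finset M)
    (hcard : ∀ i : N, ((ψ i).card : ℤ) = e {i})
    (hdisj : ∀ i j : N, i ≠ j → Disjoint (ψ i) (ψ j)) :
    expandQ e ψ ∅ = 0 ∧
    (∀ K ⊆ Finset.univ.biUnion ψ,
      expandQ e ψ K = expandQ e ψ (Finset.univ.biUnion ψ \ K)) ∧
    (∀ K ⊆ Finset.univ.biUnion ψ, ∀ L ⊆ Finset.univ.biUnion ψ,
      expandQ e ψ (K ∪ L) + expandQ e ψ (K ∩ L) ≤ expandQ e ψ K + expandQ e ψ L) ∧
    (∀ k ∈ Finset.univ.biUnion ψ, expandQ e ψ {k} = 1) := by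
  have hψ : Pairwise (Disjoint on ψ) := fun i j => hdisj i j
  have hnonneg := nonneg_of_posimodular hnorm (posimodular_of_submodular_of_compl hcompl hsub)
  exact ⟨expandQ_empty hnorm hnonneg,
    fun K hK => (expandQ_sdiff hcompl hψ hK).symm,
    fun K _ L _ => expandQ_submodular hsub hψ K L,
    fun k _ => expandQ_singleton hnorm hcompl hsub hcard hψ k⟩
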